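/- Let F : (0,∞) → ℝ be differentiable with σ_F(x) := sup_{y ≥ x} |F(y)| finite for all x > 0 and |F'| integrable on (0,∞); set σ_{1F}(x) := ∫_x^∞ σ_F(y) dy and σ_{2F}(x) := ∫_x^∞ |F'(y)| dy. Let 0 ≤ δ < 1 and x ≥ 0 be such that σ_{1F}(2x) ≤ δ. Suppose A(x,·) ∈ L¹(x,∞) satisfies the Marchenko equation A(x,y) + ∫_x^∞ A(x,t) F(t+y) dt = −F(x+y) for y ≥ x, is differentiable in y, and its derivative satisfies the differentiated equation A_y(x,y) + ∫_x^∞ A(x,s) F'(s+y) ds = −F'(x+y) for y ≥ x. Then ∫_x^∞ |A_y(x,y)| dy ≤ σ_{2F}(2x) · (1 + σ_{1F}(2x)/(1−δ)). -/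

import Mathlib

/-! The differentiated equation gives
`|A_y(y)| ≤ |F'(x+y)| + ∫_x^∞ |A(s)| |F'(s+y)| ds`. Integrating over `y > x` and swapping
the integrals (Tonelli), both terms are controlled by `σ_{2F}(2x)` because `s + y > 2x`,
so `∫_x^∞ |A_y| ≤ σ_{2F}(2x) (1 + ‖A‖₁)`. The same argument for the equation itself, with
`|F(t+y)| ≤ σ_F(x+y)`, gives `‖A‖₁ ≤ σ_{1F}(2x) (1 + ‖A‖₁)`, hence
`‖A‖₁ ≤ σ_{1F}(2x) / (1 - δ)`. -/

open MeasureTheory Set Filter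

/-- `σ_F(x) := sup_{y ≥ x} |F(y)|`. -/
noncomputable def sigmaF (F : ℝ → ℝ) (x : ℝ) : ℝ :=
  sSup ((fun y => |F y|) '' Set.Ici x)

open scoped ENNReal

lemma measurePreserving_add_right_restrict_Ioi (a c : ℝ) :
    MeasurePreserving (· + c) (volume.restrict (Ioi a)) (volume.restrict (Ioi (a + c))) := by
  simpa using (measurePreserving_add_right volume c).restrict_preimage_emb
    (measurableEmbedding_addRight c) (Ioi (a + c))

lemma integral_norm_le_of_lintegral_enorm_le {α E : Type*} [MeasurableSpace α] {μ : Measure α}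
    [NormedAddCommGroup E] {f : α → E} {C : ℝ} (hC : 0 ≤ C)
    (h : ∫⁻ a, ‖f a‖ₑ ∂μ ≤ ENNReal.ofReal C) : ∫ a, ‖f a‖ ∂μ ≤ C := by
  by_cases hf : AEStronglyMeasurable (fun a => ‖f a‖) μ
  · rw [integral_eq_lintegral_of_nonneg_ae (Eventually.of_forall fun _ => norm_nonneg _) hf]
    simp_rw [ofReal_norm]
    exact ENNReal.toReal_le_of_le_ofReal hC h
  · rw [integral_non_aestronglyMeasurable hf]
    exact hC

lemma abs_le_sigmaF {F : ℝ → ℝ} {w z : ℝ} (hF : BddAbove ((fun y => |F y|) '' Ici w))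
    (hwz : w ≤ z) : |F z| ≤ sigmaF F w :=
  le_csSup hF ⟨z, hwz, rfl⟩

lemma abs_setIntegral_mul_comp_add_le_sigmaF {F A : ℝ → ℝ} {x y : ℝ}
    (hF : BddAbove ((fun y => |F y|) '' Ici (x + y))) (hA : IntegrableOn A (Ioi x)) :
    |∫ t in Ioi x, A t * F (t + y)| ≤ (∫ t in Ioi x, |A t|) * sigmaF F (x + y) := by
  rw [← integral_mul_const (sigmaF F (x + y))]
  refine norm_integral_le_of_norm_le (f := fun t => A t * F (t + y)) (hA.abs.mul_const _) ?_
  filter_upwards [ae_restrict_mem measurableSet_Ioi] with t (ht : x < t)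
  rw [Real.norm_eq_abs, abs_mul]
  exact mul_le_mul_of_nonneg_left (abs_le_sigmaF hF (by linarith)) (abs_nonneg _)

lemma le_div_one_sub_of_le_mul_one_add {c s δ : ℝ} (hc : 0 ≤ c) (hs : s ≤ δ) (hδ : δ < 1)
    (h : c ≤ s * (1 + c)) : c ≤ s / (1 - δ) := by
  rw [le_div_iff₀ (by linarith)]
  nlinarith

lemma lintegral_Ioi_lintegral_Ioi_mul_comp_add_le (a : ℝ) {f g : ℝ → ℝ≥0∞}
    (hf : AEMeasurable f (volume.restrict (Ioi a)))
    (hg : AEMeasurable g (volume.restrict (Ioi (2 * a)))) :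
    ∫⁻ y in Ioi a, ∫⁻ s in Ioi a, f s * g (s + y) ≤
      (∫⁻ s in Ioi a, f s) * ∫⁻ z in Ioi (2 * a), g z := by
  -- Extended by zero, `g` is a.e.-measurable on all of `ℝ`, where addition is
  -- quasi-measure-preserving.
  have hprod : AEMeasurable (Function.uncurry fun y s => f s * g (s + y))
      ((volume.restrict (Ioi a)).prod (volume.restrict (Ioi a))) := by
    have hg' : AEMeasurable (fun p : ℝ × ℝ => (Ioi (2 * a)).indicator g (p.2 + p.1))
        (volume.prod volume) :=
      ((aemeasurable_indicator_iff measurableSet_Ioi).2 hg).comp_quasiMeasurePreserving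
        (quasiMeasurePreserving_add_swap volume volume)
    have hf' := hf.comp_snd (μ := volume.restrict (Ioi a))
    rw [Measure.prod_restrict] at hf' ⊢
    refine hf'.mul (hg'.restrict.congr ?_)
    filter_upwards [ae_restrict_mem (measurableSet_Ioi.prod measurableSet_Ioi)]
      with p ⟨hp1, hp2⟩
    have : p.2 + p.1 ∈ Ioi (2 * a) := by simp only [mem_Ioi] at *; linarith
    simp [indicator_of_mem this]
  rw [lintegral_lintegral_swap hprod, ← lintegral_mul_const'' _ hf]
  refine lintegral_mono_ae ?_
  filter_upwards [ae_restrict_mem measurableSet_Ioi] with s (hs : a < s)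
  have hshift := measurePreserving_add_right_restrict_Ioi a s
  have hgs : AEMeasurable (fun y => g (s + y)) (volume.restrict (Ioi a)) := by
    simp_rw [add_comm s]
    exact (hg.mono_set (Ioi_subset_Ioi (by linarith))).comp_quasiMeasurePreserving
      hshift.quasiMeasurePreserving
  rw [lintegral_const_mul'' _ hgs]
  gcongr f s * ?_
  calc ∫⁻ y in Ioi a, g (s + y) = ∫⁻ z in Ioi (a + s), g z := by
        simp_rw [add_comm s]
        exact hshift.lintegral_comp_emb (measurableEmbedding_addRight s) g
    _ ≤ ∫⁻ z in Ioi (2 * a), g z := lintegral_mono_set (Ioi_subset_Ioi (by linarith))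

lemma integral_abs_le_integral_sigmaF_mul_of_marchenko {F A : ℝ → ℝ} {x : ℝ} (hx : 0 ≤ x)
    (hFbdd : ∀ w > (0 : ℝ), BddAbove ((fun y => |F y|) '' Ici w))
    (hσint : IntegrableOn (sigmaF F) (Ioi (2 * x))) (hAint : IntegrableOn A (Ioi x))
    (heq : ∀ y > x, A y + ∫ t in Ioi x, A t * F (t + y) = -F (x + y)) :
    ∫ y in Ioi x, |A y| ≤ (∫ y in Ioi (2 * x), sigmaF F y) * (1 + ∫ y in Ioi x, |A y|) := by
  set c := ∫ y in Ioi x, |A y|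
  have hshift := measurePreserving_add_right_restrict_Ioi x x
  rw [← two_mul] at hshift
  have hσshift : IntegrableOn (fun y => sigmaF F (y + x)) (Ioi x) :=
    (hshift.integrable_comp_emb (measurableEmbedding_addRight x)).2 hσint
  have hpt : ∀ y > x, |A y| ≤ sigmaF F (y + x) * (1 + c) := by
    intro y hy
    have hbdd := hFbdd (x + y) (by linarith)
    calc |A y| = |F (x + y) + ∫ t in Ioi x, A t * F (t + y)| := by
          rw [show A y = -(F (x + y) + ∫ t in Ioi x, A t * F (t + y)) by linarith [heq y hy],
            abs_neg]
      _ ≤ |F (x + y)| + |∫ t in Ioi x, A t * F (t + y)| := abs_add_le _ _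
      _ ≤ sigmaF F (x + y) + c * sigmaF F (x + y) :=
          add_le_add (abs_le_sigmaF hbdd le_rfl)
            (abs_setIntegral_mul_comp_add_le_sigmaF hbdd hAint)
      _ = sigmaF F (y + x) * (1 + c) := by rw [add_comm x y]; ring
  calc c ≤ ∫ y in Ioi x, sigmaF F (y + x) * (1 + c) :=
        setIntegral_mono_on hAint.abs (hσshift.mul_const _) measurableSet_Ioi hpt
    _ = _ := by rw [integral_mul_const, hshift.integral_comp (measurableEmbedding_addRight x)]

lemma enorm_le_of_add_integral_eq_neg {A k : ℝ → ℝ} {x y u : ℝ}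
    (h : u + ∫ t in Ioi x, A t * k (t + y) = -k (x + y)) :
    ‖u‖ₑ ≤ ‖k (y + x)‖ₑ + ∫⁻ t in Ioi x, ‖A t‖ₑ * ‖k (t + y)‖ₑ := by
  rw [show u = -(k (x + y) + ∫ t in Ioi x, A t * k (t + y)) by linarith, enorm_neg, add_comm x y]
  refine (enorm_add_le _ _).trans ?_
  gcongr
  simpa only [enorm_mul] using enorm_integral_le_lintegral_enorm (fun t => A t * k (t + y))

lemma integral_abs_le_integral_abs_mul_of_marchenko {F' A Ay : ℝ → ℝ} {x : ℝ}
    (hF'int : IntegrableOn (fun y => |F' y|) (Ioi (2 * x))) (hAint : IntegrableOn A (Ioi x))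
    (heq' : ∀ y > x, Ay y + ∫ s in Ioi x, A s * F' (s + y) = -F' (x + y)) :
    ∫ y in Ioi x, |Ay y| ≤ (∫ y in Ioi (2 * x), |F' y|) * (1 + ∫ y in Ioi x, |A y|) := by
  have hshift := measurePreserving_add_right_restrict_Ioi x x
  rw [← two_mul] at hshift
  have hF'meas : AEMeasurable (fun z => ‖F' z‖ₑ) (volume.restrict (Ioi (2 * x))) := by
    simpa using hF'int.aestronglyMeasurable.enorm
  have hF'L1 : ∫⁻ z in Ioi (2 * x), ‖F' z‖ₑ = ENNReal.ofReal (∫ y in Ioi (2 * x), |F' y|) := by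
    simpa using (ofReal_integral_norm_eq_lintegral_enorm hF'int).symm
  have hAL1 : ∫⁻ s in Ioi x, ‖A s‖ₑ = ENNReal.ofReal (∫ s in Ioi x, |A s|) :=
    (ofReal_integral_norm_eq_lintegral_enorm hAint).symm
  refine integral_norm_le_of_lintegral_enorm_le (f := Ay) ?_ ?_
  · positivity
  calc ∫⁻ y in Ioi x, ‖Ay y‖ₑ
      ≤ ∫⁻ y in Ioi x, (‖F' (y + x)‖ₑ + ∫⁻ s in Ioi x, ‖A s‖ₑ * ‖F' (s + y)‖ₑ) :=
        setLIntegral_mono' measurableSet_Ioi fun y hy =>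
          enorm_le_of_add_integral_eq_neg (heq' y hy)
    _ = (∫⁻ y in Ioi x, ‖F' (y + x)‖ₑ) +
          ∫⁻ y in Ioi x, ∫⁻ s in Ioi x, ‖A s‖ₑ * ‖F' (s + y)‖ₑ :=
        lintegral_add_left' (hF'meas.comp_quasiMeasurePreserving hshift.quasiMeasurePreserving) _
    _ ≤ (∫⁻ z in Ioi (2 * x), ‖F' z‖ₑ) +
          (∫⁻ s in Ioi x, ‖A s‖ₑ) * ∫⁻ z in Ioi (2 * x), ‖F' z‖ₑ := by
        rw [hshift.lintegral_comp_emb (measurableEmbedding_addRight x) (fun z => ‖F' z‖ₑ)]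
        gcongr
        exact lintegral_Ioi_lintegral_Ioi_mul_comp_add_le x hAint.aestronglyMeasurable.enorm
          hF'meas
    _ = ENNReal.ofReal ((∫ y in Ioi (2 * x), |F' y|) * (1 + ∫ y in Ioi x, |A y|)) := by
        rw [hF'L1, hAL1, ENNReal.ofReal_mul (by positivity),
          ENNReal.ofReal_add zero_le_one (by positivity), ENNReal.ofReal_one]
        ring

theorem marchenko_Ay_L1_bound_general
    (F F' : ℝ → ℝ)
    (hFbdd : ∀ x > (0 : ℝ), BddAbove ((fun y => |F y|) '' Set.Ici x))
    (hF'int : IntegrableOn (fun y => |F' y|) (Set.Ioi 0))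
    (δ : ℝ) (hδ1 : δ < 1)
    (x : ℝ) (hx : 0 ≤ x)
    (hσint : IntegrableOn (sigmaF F) (Set.Ioi (2 * x)))
    (hsmall : (∫ y in Set.Ioi (2 * x), sigmaF F y) ≤ δ)
    (A Ay : ℝ → ℝ) (hAint : IntegrableOn A (Set.Ioi x))
    (heq : ∀ y ≥ x, A y + ∫ t in Set.Ioi x, A t * F (t + y) = -F (x + y))
    (heq' : ∀ y ≥ x, Ay y + ∫ s in Set.Ioi x, A s * F' (s + y) = -F' (x + y)) :
    (∫ y in Set.Ioi x, |Ay y|) ≤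
      (∫ y in Set.Ioi (2 * x), |F' y|) *
        (1 + (∫ y in Set.Ioi (2 * x), sigmaF F y) / (1 - δ)) := by
  have hAL1 :=
    le_div_one_sub_of_le_mul_one_add (integral_nonneg fun _ => abs_nonneg _) hsmall hδ1
    (integral_abs_le_integral_sigmaF_mul_of_marchenko hx hFbdd hσint hAint
      fun y hy => heq y hy.le)
  have hF'int2x : IntegrableOn (fun y => |F' y|) (Ioi (2 * x)) :=
    hF'int.mono_set (Ioi_subset_Ioi (by linarith))
  calc ∫ y in Ioi x, |Ay y|
      ≤ (∫ y in Ioi (2 * x), |F' y|) * (1 + ∫ y in Ioi x, |A y|) :=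
        integral_abs_le_integral_abs_mul_of_marchenko hF'int2x hAint fun y hy => heq' y hy.le
    _ ≤ _ := by gcongr

/-- bound on the `L¹` norm of the `y`-derivative of the Marchenko kernel:
`∫_x^∞ |A_y(x,y)| dy ≤ σ_{2F}(2x)·(1 + σ_{1F}(2x)/(1−δ))`. -/
theorem marchenko_Ay_L1_bound
    (F F' : ℝ → ℝ) (hFderiv : ∀ y > (0 : ℝ), HasDerivAt F (F' y) y)
    (hFbdd : ∀ x > (0 : ℝ), BddAbove ((fun y => |F y|) '' Set.Ici x))
    (hF'int : IntegrableOn (fun y => |F' y|) (Set.Ioi 0))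
    (δ : ℝ) (hδ0 : 0 ≤ δ) (hδ1 : δ < 1)
    (x : ℝ) (hx : 0 ≤ x)
    (hσint : IntegrableOn (sigmaF F) (Set.Ioi (2 * x)))
    (hsmall : (∫ y in Set.Ioi (2 * x), sigmaF F y) ≤ δ)
    (A Ay : ℝ → ℝ) (hAint : IntegrableOn A (Set.Ioi x))
    (heq : ∀ y ≥ x, A y + ∫ t in Set.Ioi x, A t * F (t + y) = -F (x + y))
    (hAderiv : ∀ y ≥ x, HasDerivAt A (Ay y) y)
    (heq' : ∀ y ≥ x, Ay y + ∫ s in Set.Ioi x, A s * F' (s + y) = -F' (x + y)) :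
    (∫ y in Set.Ioi x, |Ay y|) ≤
      (∫ y in Set.Ioi (2 * x), |F' y|) *
        (1 + (∫ y in Set.Ioi (2 * x), sigmaF F y) / (1 - δ)) :=
  marchenko_Ay_L1_bound_general F F' hFbdd hF'int δ hδ1 x hx hσint hsmall A Ay hAint heq heq'
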